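/- arXiv:1810.03892 — 3 statements merged into one kernel-verified Lean document; each statement's English description precedes it below -/
import Mathlib

section
/- Given an inf-sup stable pair (Ṽ, Q̃) with constant β̃ > 0, and the supremizer operator T : Q̃ → Ṽ defined by (Tq, w)_V = b(w, q) for all w ∈ Ṽ, for any subspace Q_R ⊆ Q̃ and any subspace V_R ⊆ Ṽ containing T(Q_R), the reduced inf-sup constant β_R = inf_{q ∈ Q_R, q ≠ 0} sup_{w ∈ V_R, w ≠ 0} b(w,q)/(‖w‖_V ‖q‖_Q) satisfies β_R ≥ β̃ > 0. -/
/-!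
The supremizer `T q` is the Riesz representative of `b (·) q`, so by Cauchy–Schwarz every
quotient `b w q / (‖w‖ * ‖q‖)` is at most `‖T q‖ / ‖q‖`, with equality at `w = T q`. Hence the
supremum over all of `V` is at most `‖T q‖ / ‖q‖`, and this value is already reached inside any
`V_R` containing `T q`.
-/

open scoped InnerProductSpace

section Supremizer

variable {V Q : Type*} [NormedAddCommGroup V] [InnerProductSpace ℝ V]
  [NormedAddCommGroup Q] [NormedSpace ℝ Q]
  (b : V →ₗ[ℝ] Q →ₗ[ℝ] ℝ) {q : Q} {u : V}

theorem div_norm_mul_norm_le_of_inner_eq (hu : ∀ w, ⟪u, w⟫_ℝ = b w q) (w : V) :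
    b w q / (‖w‖ * ‖q‖) ≤ ‖u‖ / ‖q‖ := by
  rcases eq_or_ne w 0 with rfl | hw
  · simp only [map_zero, LinearMap.zero_apply, zero_div]
    positivity
  calc b w q / (‖w‖ * ‖q‖) ≤ ‖u‖ * ‖w‖ / (‖w‖ * ‖q‖) := by
        gcongr
        exact hu w ▸ real_inner_le_norm u w
    _ = ‖u‖ / ‖q‖ := by rw [mul_comm ‖w‖, mul_div_mul_right _ _ (norm_ne_zero_iff.mpr hw)]

theorem sSup_div_norm_mul_norm_le_of_inner_eq (hu : ∀ w, ⟪u, w⟫_ℝ = b w q) :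
    sSup {r : ℝ | ∃ w : V, w ≠ 0 ∧ r = b w q / (‖w‖ * ‖q‖)} ≤ ‖u‖ / ‖q‖ := by
  refine Real.sSup_le ?_ (by positivity)
  rintro r ⟨w, -, rfl⟩
  exact div_norm_mul_norm_le_of_inner_eq b hu w

theorem le_sSup_div_norm_mul_norm_of_inner_eq {S : Set V} (hu : ∀ w, ⟪u, w⟫_ℝ = b w q)
    (huS : u ∈ S) :
    ‖u‖ / ‖q‖ ≤ sSup {r : ℝ | ∃ w, w ∈ S ∧ w ≠ 0 ∧ r = b w q / (‖w‖ * ‖q‖)} := by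
  rcases eq_or_ne u 0 with rfl | hu0
  · -- every quotient vanishes, and `sSup ∅ = 0` covers the case `S ⊆ {0}`
    rw [norm_zero, zero_div]
    refine Real.sSup_nonneg ?_
    rintro r ⟨w, -, -, rfl⟩
    rw [← hu, inner_zero_left, zero_div]
  refine le_csSup ⟨‖u‖ / ‖q‖, ?_⟩ ⟨u, huS, hu0, ?_⟩
  · rintro r ⟨w, -, -, rfl⟩
    exact div_norm_mul_norm_le_of_inner_eq b hu w
  · rw [← hu, real_inner_self_eq_norm_sq, sq, mul_div_mul_left _ _ (norm_ne_zero_iff.mpr hu0)]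

end Supremizer

theorem stmt_2_general {V Q : Type*} [NormedAddCommGroup V] [InnerProductSpace ℝ V]
    [NormedAddCommGroup Q] [InnerProductSpace ℝ Q]
    (b : V →ₗ[ℝ] Q →ₗ[ℝ] ℝ)
    (T : Q → V) (hT : ∀ q w, ⟪T q, w⟫_ℝ = b w q)
    (β : ℝ)
    (hinfsup : ∀ q : Q, q ≠ 0 →
      β ≤ sSup {r : ℝ | ∃ w : V, w ≠ 0 ∧ r = b w q / (‖w‖ * ‖q‖)})
    (QR : Submodule ℝ Q) (VR : Submodule ℝ V) (hTQ : ∀ q ∈ QR, T q ∈ VR) :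
    ∀ q ∈ QR, q ≠ 0 →
      β ≤ sSup {r : ℝ | ∃ w, w ∈ VR ∧ w ≠ 0 ∧ r = b w q / (‖w‖ * ‖q‖)} := by
  intro q hq hq0
  calc β ≤ sSup {r : ℝ | ∃ w : V, w ≠ 0 ∧ r = b w q / (‖w‖ * ‖q‖)} := hinfsup q hq0
    _ ≤ ‖T q‖ / ‖q‖ := sSup_div_norm_mul_norm_le_of_inner_eq b (hT q)
    _ ≤ _ := le_sSup_div_norm_mul_norm_of_inner_eq b (hT q) (SetLike.mem_coe.mpr (hTQ q hq))

/-- Supremizer enrichment: if `(Ṽ, Q̃)` is inf-sup stable with constant `β̃ > 0` and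
`T : Q̃ → Ṽ` is the supremizer operator `(Tq, w)_V = b(w, q)`, then for any subspace
`Q_R` and any subspace `V_R` containing `T(Q_R)`, the reduced inf-sup constant satisfies
`β_R ≥ β̃`, i.e. for every nonzero `q ∈ Q_R` the reduced supremum is at least `β̃`. -/
theorem stmt_2 {V Q : Type*} [NormedAddCommGroup V] [InnerProductSpace ℝ V] [CompleteSpace V]
    [NormedAddCommGroup Q] [InnerProductSpace ℝ Q] [CompleteSpace Q]
    (b : V →ₗ[ℝ] Q →ₗ[ℝ] ℝ) (C : ℝ) (hb : ∀ w q, |b w q| ≤ C * ‖w‖ * ‖q‖)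
    (T : Q → V) (hT : ∀ q w, ⟪T q, w⟫_ℝ = b w q)
    (β : ℝ) (hβ : 0 < β)
    (hinfsup : ∀ q : Q, q ≠ 0 →
      β ≤ sSup {r : ℝ | ∃ w : V, w ≠ 0 ∧ r = b w q / (‖w‖ * ‖q‖)})
    (QR : Submodule ℝ Q) (VR : Submodule ℝ V) (hTQ : ∀ q ∈ QR, T q ∈ VR) :
    ∀ q ∈ QR, q ≠ 0 →
      β ≤ sSup {r : ℝ | ∃ w, w ∈ VR ∧ w ≠ 0 ∧ r = b w q / (‖w‖ * ‖q‖)} :=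
  stmt_2_general b T hT β hinfsup QR VR hTQ
end

section
/- If the pair (Ṽ, Q̃) satisfies the inf-sup condition with constant β̃ > 0 and V_R is spanned by the velocity POD modes φ¹,…,φ^{R_y} together with the supremizers Tψ¹,…,Tψ^{R_p} of a basis ψ¹,…,ψ^{R_p} of Q_R ⊆ Q̃, then the pair (V_R, Q_R) satisfies the inf-sup condition with constant β_R ≥ β̃, independently of the choice of φ¹,…,φ^{R_y}. -/
/-!
Let `q = ∑ cᵢ ψⁱ ∈ Q_R`. The supremizer identity is linear in `q`, so `w = ∑ cᵢ Tψⁱ` is the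
Riesz representer of `b(·, q)` on `Ṽ`, and it lies in `V_R ⊆ Ṽ`. By Cauchy–Schwarz the inf-sup
quotient `b(v, q) / (‖v‖ ‖q‖) = ⟪w, v⟫ / (‖v‖ ‖q‖)` is bounded by `‖w‖ / ‖q‖` on `Ṽ` and attains
it at `v = w`, so its suprema over `Ṽ` and over `V_R` both equal `‖w‖ / ‖q‖`.
-/

open scoped InnerProductSpace

theorem sSup_div_norm_mul_eq_of_inner_eq {V : Type*} [NormedAddCommGroup V]
    [InnerProductSpace ℝ V] {W : Submodule ℝ V} {f : V → ℝ} {w : V}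
    (hw : w ∈ W) (hf : ∀ v ∈ W, ⟪w, v⟫_ℝ = f v) {c : ℝ} (hc : 0 < c) :
    sSup {r : ℝ | ∃ v, v ∈ W ∧ v ≠ 0 ∧ r = f v / (‖v‖ * c)} = ‖w‖ / c := by
  have upper : ∀ r ∈ {r : ℝ | ∃ v, v ∈ W ∧ v ≠ 0 ∧ r = f v / (‖v‖ * c)}, r ≤ ‖w‖ / c := by
    rintro r ⟨v, hv, hv0, rfl⟩
    have hv0' : 0 < ‖v‖ := norm_pos_iff.2 hv0
    rw [← hf v hv, div_le_div_iff₀ (by positivity) hc]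
    nlinarith [real_inner_le_norm w v]
  refine le_antisymm (Real.sSup_le upper (by positivity)) ?_
  rcases eq_or_ne w 0 with rfl | hw0
  · rw [norm_zero, zero_div]
    refine Real.sSup_nonneg fun r ⟨v, hv, _, hr⟩ => ?_
    rw [hr, ← hf v hv, inner_zero_left, zero_div]
  · refine le_csSup ⟨_, upper⟩ ⟨w, hw, hw0, ?_⟩
    have hw0' : 0 < ‖w‖ := norm_pos_iff.2 hw0
    rw [← hf w hw, real_inner_self_eq_norm_sq]
    field_simp

theorem exists_mem_span_image_inner_eq {V Q : Type*} [NormedAddCommGroup V]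
    [InnerProductSpace ℝ V] [AddCommGroup Q] [Module ℝ Q] (b : V →ₗ[ℝ] Q →ₗ[ℝ] ℝ)
    {Vt : Submodule ℝ V} {Qt : Submodule ℝ Q} {T : Q → V}
    (hT : ∀ q ∈ Qt, ∀ w ∈ Vt, ⟪T q, w⟫_ℝ = b w q) {s : Set Q} (hs : s ⊆ Qt) {q : Q}
    (hq : q ∈ Submodule.span ℝ s) :
    ∃ w ∈ Submodule.span ℝ (T '' s), ∀ v ∈ Vt, ⟪w, v⟫_ℝ = b v q := by
  induction hq using Submodule.span_induction with
  | mem p hp => exact ⟨T p, Submodule.subset_span (Set.mem_image_of_mem T hp), hT p (hs hp)⟩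
  | zero => exact ⟨0, Submodule.zero_mem _, fun v _ => by simp⟩
  | add p p' _ _ h h' =>
    obtain ⟨w, hw, hwp⟩ := h
    obtain ⟨w', hw', hwp'⟩ := h'
    exact ⟨w + w', Submodule.add_mem _ hw hw', fun v hv => by
      rw [inner_add_left, hwp v hv, hwp' v hv, map_add]⟩
  | smul a p _ h =>
    obtain ⟨w, hw, hwp⟩ := h
    exact ⟨a • w, Submodule.smul_mem _ a hw, fun v hv => by
      rw [real_inner_smul_left, hwp v hv, map_smul, smul_eq_mul]⟩

theorem stmt_16_general {V Q : Type*} [NormedAddCommGroup V] [InnerProductSpace ℝ V]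
    [NormedAddCommGroup Q] [InnerProductSpace ℝ Q]
    (b : V →ₗ[ℝ] Q →ₗ[ℝ] ℝ)
    (Vt : Submodule ℝ V) (Qt : Submodule ℝ Q)
    (T : Q → V) (hTmem : ∀ q ∈ Qt, T q ∈ Vt)
    (hT : ∀ q ∈ Qt, ∀ w ∈ Vt, ⟪T q, w⟫_ℝ = b w q)
    (β : ℝ)
    (hinfsup : ∀ q ∈ Qt, q ≠ 0 →
      β ≤ sSup {r : ℝ | ∃ w, w ∈ Vt ∧ w ≠ 0 ∧ r = b w q / (‖w‖ * ‖q‖)})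
    {Ry Rp : ℕ} (φ : Fin Ry → V) (hφ : ∀ i, φ i ∈ Vt)
    (ψ : Fin Rp → Q) (hψ : ∀ i, ψ i ∈ Qt) :
    ∀ q ∈ Submodule.span ℝ (Set.range ψ), q ≠ 0 →
      β ≤ sSup {r : ℝ | ∃ w,
        w ∈ Submodule.span ℝ (Set.range φ ∪ Set.range (fun i => T (ψ i))) ∧
        w ≠ 0 ∧ r = b w q / (‖w‖ * ‖q‖)} := by
  intro q hq hq0
  have hψQt : Set.range ψ ⊆ Qt := Set.range_subset_iff.2 hψ
  have hVR : Submodule.span ℝ (Set.range φ ∪ Set.range (fun i => T (ψ i))) ≤ Vt :=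
    Submodule.span_le.2 <| Set.union_subset (Set.range_subset_iff.2 hφ)
      (Set.range_subset_iff.2 fun i => hTmem _ (hψ i))
  obtain ⟨w, hwT, hw⟩ := exists_mem_span_image_inner_eq b hT hψQt hq
  have hwVR : w ∈ Submodule.span ℝ (Set.range φ ∪ Set.range (fun i => T (ψ i))) := by
    rw [← Set.range_comp] at hwT
    exact Submodule.span_mono Set.subset_union_right hwT
  have hq' : 0 < ‖q‖ := norm_pos_iff.2 hq0
  calc β ≤ sSup {r : ℝ | ∃ v, v ∈ Vt ∧ v ≠ 0 ∧ r = b v q / (‖v‖ * ‖q‖)} :=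
        hinfsup q (Submodule.span_le.2 hψQt hq) hq0
    _ = ‖w‖ / ‖q‖ := sSup_div_norm_mul_eq_of_inner_eq (hVR hwVR) hw hq'
    _ = _ := (sSup_div_norm_mul_eq_of_inner_eq hwVR (fun v hv => hw v (hVR hv)) hq').symm

/-- If `(Ṽ, Q̃)` is inf-sup stable with constant `β̃ > 0` and `V_R` is spanned by arbitrary
velocity POD modes `φⁱ ∈ Ṽ` together with the supremizers `Tψ¹,…,Tψ^{R_p}` of a basis of
`Q_R ⊆ Q̃`, then `(V_R, Q_R)` is inf-sup stable with constant `β_R ≥ β̃`, independently of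
the choice of the `φⁱ`. -/
theorem stmt_16 {V Q : Type*} [NormedAddCommGroup V] [InnerProductSpace ℝ V] [CompleteSpace V]
    [NormedAddCommGroup Q] [InnerProductSpace ℝ Q] [CompleteSpace Q]
    (b : V →ₗ[ℝ] Q →ₗ[ℝ] ℝ) (C : ℝ) (hb : ∀ w q, |b w q| ≤ C * ‖w‖ * ‖q‖)
    (Vt : Submodule ℝ V) (Qt : Submodule ℝ Q)
    (T : Q → V) (hTmem : ∀ q ∈ Qt, T q ∈ Vt)
    (hT : ∀ q ∈ Qt, ∀ w ∈ Vt, ⟪T q, w⟫_ℝ = b w q)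
    (β : ℝ) (hβ : 0 < β)
    (hinfsup : ∀ q ∈ Qt, q ≠ 0 →
      β ≤ sSup {r : ℝ | ∃ w, w ∈ Vt ∧ w ≠ 0 ∧ r = b w q / (‖w‖ * ‖q‖)})
    {Ry Rp : ℕ} (φ : Fin Ry → V) (hφ : ∀ i, φ i ∈ Vt)
    (ψ : Fin Rp → Q) (hψ : ∀ i, ψ i ∈ Qt) :
    ∀ q ∈ Submodule.span ℝ (Set.range ψ), q ≠ 0 →
      β ≤ sSup {r : ℝ | ∃ w,
        w ∈ Submodule.span ℝ (Set.range φ ∪ Set.range (fun i => T (ψ i))) ∧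
        w ≠ 0 ∧ r = b w q / (‖w‖ * ‖q‖)} :=
  stmt_16_general b Vt Qt T hTmem hT β hinfsup φ hφ ψ hψ
end

section
/- For weights α₁,…,αₙ = Δt > 0, the POD objective over orthonormal systems of size R in a finite-dimensional snapshot span is minimized by eigenvectors of the weighted correlation operator K : X → X, Ku = Σⱼ αⱼ (uʲ, u)_X uʲ, corresponding to its R largest eigenvalues, and the minimal value equals Σ_{i>R} λᵢ, the sum of the remaining eigenvalues. -/
/-!
Every snapshot lies in the span of the orthonormal eigenvectors `e`, so the quadratic form of
`K` diagonalises: `∑ⱼ αⱼ (uʲ, v)² = ∑ₖ λₖ (eₖ, v)²` for every `v`. By Pythagoras the POD objective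
of an orthonormal system `φ` is therefore `∑ₖ λₖ - ∑ₖ λₖ tₖ` with `tₖ = ∑ᵢ (eₖ, φᵢ)²`. Bessel's
inequality gives `0 ≤ tₖ ≤ 1` and `∑ₖ tₖ ≤ R`, and weights of this kind can collect at most the
`R` largest of the nonnegative eigenvalues, which is exactly what `e₁, …, e_R` collect.
-/
open scoped InnerProductSpace
open Finset

section Orthonormal

variable {X ι : Type*} [NormedAddCommGroup X] [InnerProductSpace ℝ X] [Fintype ι] {e : ι → X}

theorem Orthonormal.norm_sub_sum_inner_smul_sq (he : Orthonormal ℝ e) (v : X) :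
    ‖v - ∑ i, ⟪v, e i⟫_ℝ • e i‖ ^ 2 = ‖v‖ ^ 2 - ∑ i, ⟪v, e i⟫_ℝ ^ 2 := by
  have hproj : ⟪v, ∑ i, ⟪v, e i⟫_ℝ • e i⟫_ℝ = ∑ i, ⟪v, e i⟫_ℝ ^ 2 := by
    simp only [inner_sum, real_inner_smul_right, sq]
  have hnorm : ‖∑ i, ⟪v, e i⟫_ℝ • e i‖ ^ 2 = ∑ i, ⟪v, e i⟫_ℝ ^ 2 := by
    rw [← real_inner_self_eq_norm_sq, inner_sum]
    simp only [real_inner_smul_right, he.inner_left_fintype, sq, RCLike.conj_to_real]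
  rw [norm_sub_sq_real, hproj, hnorm]
  ring

theorem Orthonormal.sum_inner_sq_le (he : Orthonormal ℝ e) (v : X) :
    ∑ i, ⟪e i, v⟫_ℝ ^ 2 ≤ ‖v‖ ^ 2 := by
  simpa only [Real.norm_eq_abs, sq_abs] using he.sum_inner_products_le (s := univ) (x := v)

theorem Orthonormal.inner_eq_sum_of_mem_span (he : Orthonormal ℝ e) {x : X}
    (hx : x ∈ Submodule.span ℝ (Set.range e)) (v : X) :
    ⟪x, v⟫_ℝ = ∑ k, ⟪x, e k⟫_ℝ * ⟪e k, v⟫_ℝ := by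
  obtain ⟨c, rfl⟩ := (Submodule.mem_span_range_iff_exists_fun ℝ).mp hx
  simp only [sum_inner, real_inner_smul_left, he.inner_left_fintype, RCLike.conj_to_real]

theorem Orthonormal.sum_mul_inner_sq_right [DecidableEq ι] (he : Orthonormal ℝ e) (lam : ι → ℝ)
    (i : ι) :
    ∑ k, lam k * ⟪e k, e i⟫_ℝ ^ 2 = lam i := by
  simp [orthonormal_iff_ite.mp he]

end Orthonormal

theorem Fin.mem_map_castLEEmb_univ {n m : ℕ} (h : n ≤ m) (k : Fin m) :
    k ∈ univ.map (Fin.castLEEmb h) ↔ (k : ℕ) < n := by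
  rw [← Finset.mem_coe, Finset.coe_map]
  simp [Fin.range_castLE]

theorem sum_mul_le_sum_of_threshold {ι : Type*} [Fintype ι] [DecidableEq ι] {lam t : ι → ℝ}
    {s : Finset ι} {μ : ℝ} (hμ : 0 ≤ μ) (hhi : ∀ k ∈ s, μ ≤ lam k) (hlo : ∀ k ∉ s, lam k ≤ μ)
    (ht0 : ∀ k, 0 ≤ t k) (ht1 : ∀ k, t k ≤ 1) (hsum : ∑ k, t k ≤ #s) :
    ∑ k, lam k * t k ≤ ∑ k ∈ s, lam k := by
  have hterm : ∀ k, lam k * t k - (if k ∈ s then lam k else 0)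
      ≤ μ * (t k - if k ∈ s then 1 else 0) := by
    intro k
    by_cases hk : k ∈ s
    · simp only [if_pos hk]; nlinarith [hhi k hk, ht1 k]
    · simp only [if_neg hk]; nlinarith [hlo k hk, ht0 k]
  have htotal : ∑ k, lam k * t k - ∑ k ∈ s, lam k ≤ μ * (∑ k, t k - #s) := by
    simpa only [sum_sub_distrib, ← mul_sum, sum_ite_mem, univ_inter, sum_const, nsmul_eq_mul,
      mul_one] using sum_le_sum fun k (_ : k ∈ univ) => hterm k
  linarith [mul_nonpos_of_nonneg_of_nonpos hμ (sub_nonpos.2 hsum)]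

theorem sum_mul_le_sum_castLE_of_antitone {N R : ℕ} (hRN : R ≤ N) {lam t : Fin N → ℝ}
    (hlam : Antitone lam) (hnn : ∀ k, 0 ≤ lam k)
    (ht0 : ∀ k, 0 ≤ t k) (ht1 : ∀ k, t k ≤ 1) (hsum : ∑ k, t k ≤ R) :
    ∑ k, lam k * t k ≤ ∑ i : Fin R, lam (Fin.castLE hRN i) := by
  classical
  set s := univ.map (Fin.castLEEmb hRN)
  have hs : ∀ k, k ∈ s ↔ (k : ℕ) < R := Fin.mem_map_castLEEmb_univ hRN
  obtain ⟨μ, hμ, hhi, hlo⟩ : ∃ μ, 0 ≤ μ ∧ (∀ k ∈ s, μ ≤ lam k) ∧ ∀ k ∉ s, lam k ≤ μ := by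
    rcases hRN.lt_or_eq with hlt | rfl
    · refine ⟨lam ⟨R, hlt⟩, hnn _, fun k hk => hlam ?_, fun k hk => hlam ?_⟩
      · rw [hs] at hk; exact Fin.mk_le_of_le_val hk.le
      · rw [hs] at hk; exact Fin.le_def.2 (not_lt.1 hk)
    · exact ⟨0, le_rfl, fun k _ => hnn k, fun k hk => absurd ((hs k).2 k.isLt) hk⟩
  have hcard : #s = R := by simp [s]
  calc ∑ k, lam k * t k ≤ ∑ k ∈ s, lam k :=
        sum_mul_le_sum_of_threshold hμ hhi hlo ht0 ht1 (by rwa [hcard])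
    _ = ∑ i : Fin R, lam (Fin.castLE hRN i) := sum_map _ _ _

theorem Orthonormal.sum_sum_mul_inner_sq_le {X : Type*} [NormedAddCommGroup X]
    [InnerProductSpace ℝ X] {N R : ℕ} (hRN : R ≤ N) {e : Fin N → X} (he : Orthonormal ℝ e)
    {φ : Fin R → X} (hφ : Orthonormal ℝ φ) {lam : Fin N → ℝ} (hlam : Antitone lam)
    (hnn : ∀ k, 0 ≤ lam k) :
    ∑ i, ∑ k, lam k * ⟪e k, φ i⟫_ℝ ^ 2 ≤ ∑ i : Fin R, lam (Fin.castLE hRN i) := by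
  rw [sum_comm]
  simp only [← mul_sum]
  refine sum_mul_le_sum_castLE_of_antitone hRN hlam hnn
    (fun k => sum_nonneg fun i _ => sq_nonneg _) (fun k => ?_) ?_
  · simpa only [real_inner_comm (e k), he.1 k, one_pow] using hφ.sum_inner_sq_le (e k)
  · calc ∑ k, ∑ i, ⟪e k, φ i⟫_ℝ ^ 2 = ∑ i, ∑ k, ⟪e k, φ i⟫_ℝ ^ 2 := sum_comm
      _ ≤ ∑ i : Fin R, 1 := sum_le_sum fun i _ => by
        simpa only [hφ.1 i, one_pow] using he.sum_inner_sq_le (φ i)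
      _ = R := by simp

theorem Fin.sum_sub_sum_castLE {N R : ℕ} (hRN : R ≤ N) (f : Fin N → ℝ) :
    ∑ k, f k - ∑ i : Fin R, f (Fin.castLE hRN i) =
      ∑ k : Fin N, if R ≤ (k : ℕ) then f k else 0 := by
  classical
  have hmap : ∑ i : Fin R, f (Fin.castLE hRN i) = ∑ k ∈ univ.map (Fin.castLEEmb hRN), f k :=
    (sum_map univ (Fin.castLEEmb hRN) f).symm
  rw [hmap, sub_eq_iff_eq_add, ← sum_filter,
    ← sum_compl_add_sum (univ.map (Fin.castLEEmb hRN))]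
  congr 2
  ext k
  simp only [mem_compl, mem_filter, mem_univ, true_and, Fin.mem_map_castLEEmb_univ, not_lt]

section Correlation

variable {X ι κ : Type*} [NormedAddCommGroup X] [InnerProductSpace ℝ X] [Fintype ι]

def correlation (α : ι → ℝ) (u : ι → X) (v : X) : X :=
  ∑ j, α j • (⟪u j, v⟫_ℝ • u j)

theorem inner_correlation_self (α : ι → ℝ) (u : ι → X) (v : X) :
    ⟪correlation α u v, v⟫_ℝ = ∑ j, α j * ⟪u j, v⟫_ℝ ^ 2 := by
  simp only [correlation, sum_inner, real_inner_smul_left, sq]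

variable {α : ι → ℝ} {u : ι → X} {e : κ → X} {lam : κ → ℝ}

theorem eigenvalue_eq_sum_mul_inner_sq (he : Orthonormal ℝ e)
    (heig : ∀ k, correlation α u (e k) = lam k • e k) (k : κ) :
    lam k = ∑ j, α j * ⟪u j, e k⟫_ℝ ^ 2 := by
  rw [← inner_correlation_self, heig, real_inner_smul_left, real_inner_self_eq_norm_sq,
    he.1 k, one_pow, mul_one]

theorem correlation_eq_sum_of_mem_span [Fintype κ] (he : Orthonormal ℝ e)
    (heig : ∀ k, correlation α u (e k) = lam k • e k)
    (hspan : ∀ j, u j ∈ Submodule.span ℝ (Set.range e)) (v : X) :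
    correlation α u v = ∑ k, (lam k * ⟪e k, v⟫_ℝ) • e k := calc
  correlation α u v = ∑ j, α j • ((∑ k, ⟪u j, e k⟫_ℝ * ⟪e k, v⟫_ℝ) • u j) := by
    simp only [correlation, he.inner_eq_sum_of_mem_span (hspan _) v]
  _ = ∑ k, ⟪e k, v⟫_ℝ • correlation α u (e k) := by
    simp only [correlation, sum_smul, smul_sum, sum_comm (γ := κ), smul_smul]
    refine sum_congr rfl fun k _ => sum_congr rfl fun j _ => ?_
    ring_nf
  _ = ∑ k, (lam k * ⟪e k, v⟫_ℝ) • e k := by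
    simp only [heig, smul_smul, mul_comm]

theorem sum_mul_inner_sq_eq_sum_eigenvalue [Fintype κ] (he : Orthonormal ℝ e)
    (heig : ∀ k, correlation α u (e k) = lam k • e k)
    (hspan : ∀ j, u j ∈ Submodule.span ℝ (Set.range e)) (v : X) :
    ∑ j, α j * ⟪u j, v⟫_ℝ ^ 2 = ∑ k, lam k * ⟪e k, v⟫_ℝ ^ 2 := by
  rw [← inner_correlation_self, correlation_eq_sum_of_mem_span he heig hspan, sum_inner]
  simp only [real_inner_smul_left, sq, mul_assoc]

theorem sum_mul_norm_sq_eq_sum_eigenvalue [Fintype κ] (he : Orthonormal ℝ e)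
    (heig : ∀ k, correlation α u (e k) = lam k • e k)
    (hspan : ∀ j, u j ∈ Submodule.span ℝ (Set.range e)) :
    ∑ j, α j * ‖u j‖ ^ 2 = ∑ k, lam k := by
  have hparseval : ∀ j, ‖u j‖ ^ 2 = ∑ k, ⟪u j, e k⟫_ℝ ^ 2 := fun j => by
    rw [← real_inner_self_eq_norm_sq, he.inner_eq_sum_of_mem_span (hspan j)]
    simp only [real_inner_comm (u j), sq]
  simp only [hparseval, mul_sum, eigenvalue_eq_sum_mul_inner_sq he heig]
  exact sum_comm

theorem pod_objective_eq [Fintype κ] {ρ : Type*} [Fintype ρ] (he : Orthonormal ℝ e)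
    (heig : ∀ k, correlation α u (e k) = lam k • e k)
    (hspan : ∀ j, u j ∈ Submodule.span ℝ (Set.range e)) {w : ρ → X} (hw : Orthonormal ℝ w) :
    ∑ j, α j * ‖u j - ∑ i, ⟪u j, w i⟫_ℝ • w i‖ ^ 2 =
      ∑ k, lam k - ∑ i, ∑ k, lam k * ⟪e k, w i⟫_ℝ ^ 2 := by
  simp only [hw.norm_sub_sum_inner_smul_sq, mul_sub, sum_sub_distrib, mul_sum,
    sum_mul_norm_sq_eq_sum_eigenvalue he heig hspan]
  rw [sum_comm]
  simp only [sum_mul_inner_sq_eq_sum_eigenvalue he heig hspan]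

end Correlation

/-- POD optimality: with weights `αⱼ = Δt > 0`, the POD objective over orthonormal systems
of size `R` is minimized by eigenvectors of the weighted correlation operator
`Ku = Σⱼ αⱼ (uʲ, u) uʲ` corresponding to its `R` largest eigenvalues (an antitone
orthonormal eigensystem spanning the snapshots), and the minimal value equals the sum of
the remaining eigenvalues. -/
theorem stmt_17 {X : Type*} [NormedAddCommGroup X] [InnerProductSpace ℝ X]
    {n N R : ℕ} (hRN : R ≤ N) (u : Fin n → X)
    (Δt : ℝ) (hΔt : 0 < Δt) (α : Fin n → ℝ) (hα : ∀ j, α j = Δt)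
    (e : Fin N → X) (he : ∀ i j, ⟪e i, e j⟫_ℝ = if i = j then (1 : ℝ) else 0)
    (lam : Fin N → ℝ) (hlam : Antitone lam)
    (heig : ∀ i, (∑ j, α j • (⟪u j, e i⟫_ℝ • u j)) = lam i • e i)
    (hspan : ∀ j, u j ∈ Submodule.span ℝ (Set.range e)) :
    (∀ φ : Fin R → X, (∀ i j, ⟪φ i, φ j⟫_ℝ = if i = j then (1 : ℝ) else 0) →
      ∑ j, α j * ‖u j - ∑ i : Fin R, ⟪u j, e (Fin.castLE hRN i)⟫_ℝ • e (Fin.castLE hRN i)‖ ^ 2 ≤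
      ∑ j, α j * ‖u j - ∑ i : Fin R, ⟪u j, φ i⟫_ℝ • φ i‖ ^ 2) ∧
    ∑ j, α j * ‖u j - ∑ i : Fin R, ⟪u j, e (Fin.castLE hRN i)⟫_ℝ • e (Fin.castLE hRN i)‖ ^ 2 =
      ∑ i : Fin N, if R ≤ (i : ℕ) then lam i else 0 := by
  have hoe : Orthonormal ℝ e := orthonormal_iff_ite.mpr he
  have hnn : ∀ k, 0 ≤ lam k := fun k => by
    rw [eigenvalue_eq_sum_mul_inner_sq hoe heig k]
    exact sum_nonneg fun j _ => mul_nonneg (hα j ▸ hΔt.le) (sq_nonneg _)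
  have hvalue : ∑ j, α j * ‖u j - ∑ i : Fin R, ⟪u j, e (Fin.castLE hRN i)⟫_ℝ •
      e (Fin.castLE hRN i)‖ ^ 2 = ∑ k, lam k - ∑ i : Fin R, lam (Fin.castLE hRN i) := by
    have hw : Orthonormal ℝ fun i : Fin R => e (Fin.castLE hRN i) :=
      hoe.comp _ (Fin.castLE_injective hRN)
    simp only [pod_objective_eq hoe heig hspan hw, hoe.sum_mul_inner_sq_right]
  refine ⟨fun φ hφ => ?_, hvalue.trans (Fin.sum_sub_sum_castLE hRN lam)⟩
  rw [hvalue, pod_objective_eq hoe heig hspan (orthonormal_iff_ite.mpr hφ)]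
  linarith [hoe.sum_sum_mul_inner_sq_le hRN (orthonormal_iff_ite.mpr hφ) hlam hnn]
end
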